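/- Deterministic oracle inequality (Theorem 7): let = argmin_B {‖Y − XB‖_F² + μ·rank(B)} with Y = XA + E and P the projection onto the column space of X. Then for any θ > 0 with c(θ) = 1 + 2/θ, on the event (1+θ)d₁²(PE) ≤ μ, for every p×n matrix B: ‖XÂ − XA‖_F² ≤ c(θ)²‖XB − XA‖_F² + 2c(θ)·μ·rank(B). -/

import Mathlib

/-!
Comparing the penalized criterion at `Â` and at `B` gives the basic inequality
`‖XÂ - XA‖² ≤ ‖XB - XA‖² + 2⟨E, XÂ - XB⟩ + μ (rank B - rank Â)`.
As `XÂ - XB` lies in the column space of `X`, `⟨E, XÂ - XB⟩ = ⟨PE, XÂ - XB⟩`, and trace duality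
(expand the rows of `XÂ - XB` in an orthonormal basis of its row space) bounds this by
`d₁(PE) √(rank Â + rank B) (‖XÂ - XA‖ + ‖XB - XA‖)`. Two applications of `2ab ≤ εa² + b²/ε`
bound this by multiples of `‖XÂ - XA‖²`, `‖XB - XA‖²` and `(1 + θ) d₁²(PE) (rank Â + rank B)`;
the event turns the last into `μ (rank Â + rank B)`, whose `μ rank Â` part cancels.
-/

open Matrix MeasureTheory

/-- List of singular values of a real matrix, sorted in decreasing order
(square roots of the eigenvalues of `Aᵀ * A`). -/
noncomputable def svList {m n : ℕ} (A : Matrix (Fin m) (Fin n) ℝ) : List ℝ :=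
  (((List.ofFn (show (Aᵀ * A).IsHermitian by
    rw [Matrix.IsHermitian, Matrix.conjTranspose_eq_transpose_of_trivial, Matrix.transpose_mul,
      Matrix.transpose_transpose]).eigenvalues).map Real.sqrt).mergeSort
    (fun a b => decide (b ≤ a)))

/-- `sv A k` is the `k`-th largest singular value of `A` (1-indexed); `0` if `k` exceeds
the number of singular values. -/
noncomputable def sv {m n : ℕ} (A : Matrix (Fin m) (Fin n) ℝ) (k : ℕ) : ℝ :=
  (svList A).getD (k - 1) 0

/-- Nuclear norm: sum of the singular values. -/
noncomputable def nuclearNorm {m n : ℕ} (A : Matrix (Fin m) (Fin n) ℝ) : ℝ :=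
  (svList A).sum

/-- Squared Frobenius norm. -/
noncomputable def frobSq {m n : ℕ} (A : Matrix (Fin m) (Fin n) ℝ) : ℝ :=
  ∑ i, ∑ j, (A i j) ^ 2

/-- Frobenius inner product. -/
noncomputable def frobInner {m n : ℕ} (C D : Matrix (Fin m) (Fin n) ℝ) : ℝ :=
  ∑ i, ∑ j, C i j * D i j

theorem List.le_getD_zero_mergeSort_ge {α : Type*} [LinearOrder α] {l : List α} {x : α}
    (hx : x ∈ l) (d : α) : x ≤ (l.mergeSort fun a b => decide (b ≤ a)).getD 0 d := by
  have hsorted := List.pairwise_mergeSort (le := fun a b => decide (b ≤ a))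
    (fun a b c hab hbc => by simp only [decide_eq_true_eq] at *; exact hbc.trans hab)
    (fun a b => by simpa using le_total b a) l
  have hmem : x ∈ l.mergeSort fun a b => decide (b ≤ a) := (List.mergeSort_perm _ _).mem_iff.mpr hx
  cases h : l.mergeSort fun a b => decide (b ≤ a) with
  | nil => simp [h] at hmem
  | cons a t =>
    rw [h] at hmem hsorted
    rcases List.mem_cons.mp hmem with rfl | hxt
    · exact le_rfl
    · simpa using List.rel_of_pairwise_cons hsorted hxt

theorem EuclideanSpace.real_norm_sq_eq_dotProduct {ι : Type*} [Fintype ι]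
    (v : EuclideanSpace ℝ ι) : ‖v‖ ^ 2 = v.ofLp ⬝ᵥ v.ofLp := by
  rw [← real_inner_self_eq_norm_sq, EuclideanSpace.inner_eq_star_dotProduct, star_trivial]

section SingularValues

variable {m n : ℕ}

theorem sv_nonneg (N : Matrix (Fin m) (Fin n) ℝ) (k : ℕ) : 0 ≤ sv N k := by
  rw [sv, List.getD_eq_getElem?_getD]
  cases h : (svList N)[k - 1]? with
  | none => exact le_rfl
  | some x =>
    have hx : x ∈ svList N := List.mem_of_getElem? h
    simp only [svList, (List.mergeSort_perm _ _).mem_iff, List.mem_map] at hx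
    obtain ⟨y, -, rfl⟩ := hx
    exact Real.sqrt_nonneg y

theorem eigenvalues_transpose_mul_self_le_sv_one_sq (N : Matrix (Fin m) (Fin n) ℝ)
    (hN : (Nᵀ * N).IsHermitian) (i : Fin n) : hN.eigenvalues i ≤ sv N 1 ^ 2 := by
  have hsqrt : √(hN.eigenvalues i) ≤ sv N 1 :=
    List.le_getD_zero_mergeSort_ge (List.mem_map_of_mem (List.mem_ofFn.mpr ⟨i, rfl⟩)) 0
  calc hN.eigenvalues i = √(hN.eigenvalues i) ^ 2 :=
        (Real.sq_sqrt (eigenvalues_conjTranspose_mul_self_nonneg N i)).symm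
    _ ≤ sv N 1 ^ 2 := pow_le_pow_left₀ (Real.sqrt_nonneg _) hsqrt 2

open scoped MatrixOrder in
theorem transpose_mul_self_le_sv_one_sq (N : Matrix (Fin m) (Fin n) ℝ) :
    Nᵀ * N ≤ algebraMap ℝ _ (sv N 1 ^ 2) := by
  have hN : (Nᵀ * N).IsHermitian := by
    simpa using isHermitian_conjTranspose_mul_self N
  rw [le_algebraMap_iff_spectrum_le hN.isSelfAdjoint, hN.spectrum_real_eq_range_eigenvalues]
  rintro _ ⟨i, rfl⟩
  exact eigenvalues_transpose_mul_self_le_sv_one_sq N hN i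

open scoped MatrixOrder in
theorem mulVec_dotProduct_mulVec_le_sv_one_sq (N : Matrix (Fin m) (Fin n) ℝ) (x : Fin n → ℝ) :
    (N *ᵥ x) ⬝ᵥ (N *ᵥ x) ≤ sv N 1 ^ 2 * (x ⬝ᵥ x) := by
  have h := (Matrix.le_iff.mp (transpose_mul_self_le_sv_one_sq N)).dotProduct_mulVec_nonneg x
  rw [Algebra.algebraMap_eq_smul_one, sub_mulVec, smul_mulVec, one_mulVec, ← mulVec_mulVec,
    star_trivial, dotProduct_sub, dotProduct_smul, dotProduct_transpose_mulVec, smul_eq_mul] at h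
  linarith

open scoped Matrix.Norms.L2Operator in
theorem l2_opNorm_le_sv_one (N : Matrix (Fin m) (Fin n) ℝ) : ‖N‖ ≤ sv N 1 := by
  rw [l2_opNorm_def]
  refine ContinuousLinearMap.opNorm_le_bound _ (sv_nonneg N 1) fun x => ?_
  refine le_of_pow_le_pow_left₀ two_ne_zero (mul_nonneg (sv_nonneg N 1) (norm_nonneg x)) ?_
  show ‖WithLp.toLp 2 (N *ᵥ x.ofLp)‖ ^ 2 ≤ _
  rw [mul_pow, EuclideanSpace.real_norm_sq_eq_dotProduct,
    EuclideanSpace.real_norm_sq_eq_dotProduct]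
  exact mulVec_dotProduct_mulVec_le_sv_one_sq N x.ofLp

end SingularValues

section Frobenius

open scoped InnerProductSpace

variable {m n : ℕ}

noncomputable def frobVec (A : Matrix (Fin m) (Fin n) ℝ) : EuclideanSpace ℝ (Fin n × Fin m) :=
  WithLp.toLp 2 A.vec

theorem frobSq_eq_frobInner_self (A : Matrix (Fin m) (Fin n) ℝ) : frobSq A = frobInner A A := by
  simp only [frobSq, frobInner, sq]

theorem frobInner_eq_vec_dotProduct_vec (C D : Matrix (Fin m) (Fin n) ℝ) :
    frobInner C D = C.vec ⬝ᵥ D.vec := by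
  rw [frobInner, dotProduct, Fintype.sum_prod_type, Finset.sum_comm]
  rfl

theorem frobInner_eq_inner (C D : Matrix (Fin m) (Fin n) ℝ) :
    frobInner C D = ⟪frobVec C, frobVec D⟫_ℝ := by
  rw [frobVec, frobVec, EuclideanSpace.inner_toLp_toLp, star_trivial, dotProduct_comm,
    frobInner_eq_vec_dotProduct_vec]

theorem frobSq_eq_norm_sq (A : Matrix (Fin m) (Fin n) ℝ) : frobSq A = ‖frobVec A‖ ^ 2 := by
  rw [← real_inner_self_eq_norm_sq, ← frobInner_eq_inner, frobSq_eq_frobInner_self]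

theorem frobVec_sub (C D : Matrix (Fin m) (Fin n) ℝ) : frobVec (C - D) = frobVec C - frobVec D := by
  rw [frobVec, frobVec, frobVec, vec_sub, WithLp.toLp_sub]

theorem frobInner_mul_right_eq_transpose_mul_left (C M : Matrix (Fin m) (Fin n) ℝ)
    (P : Matrix (Fin m) (Fin m) ℝ) : frobInner C (P * M) = frobInner (Pᵀ * C) M := by
  rw [frobInner_eq_vec_dotProduct_vec, frobInner_eq_vec_dotProduct_vec, vec_dotProduct_vec,
    vec_dotProduct_vec, transpose_mul, transpose_transpose, Matrix.mul_assoc]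

end Frobenius

open scoped InnerProductSpace in
theorem OrthonormalBasis.inner_eq_sum_inner_mul_inner_of_mem {𝕜 E ι : Type*} [RCLike 𝕜]
    [NormedAddCommGroup E] [InnerProductSpace 𝕜 E] [Fintype ι] {K : Submodule 𝕜 E}
    (b : OrthonormalBasis ι 𝕜 K) (x : E) {y : E} (hy : y ∈ K) :
    ⟪x, y⟫_𝕜 = ∑ k, ⟪x, (b k : E)⟫_𝕜 * ⟪(b k : E), y⟫_𝕜 := by
  have hrepr : ∑ k, ⟪(b k : E), y⟫_𝕜 • (b k : E) = y := by
    simpa [Submodule.coe_inner] using congrArg Subtype.val (b.sum_repr' ⟨y, hy⟩)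
  conv_lhs => rw [← hrepr]
  simp only [inner_sum, inner_smul_right, mul_comm]

section TraceDuality

open scoped InnerProductSpace Matrix.Norms.L2Operator

variable {m n : ℕ}

theorem frobInner_eq_sum_inner_rows (C D : Matrix (Fin m) (Fin n) ℝ) :
    frobInner C D = ∑ i, ⟪WithLp.toLp 2 (C i), WithLp.toLp 2 (D i)⟫_ℝ := by
  simp only [frobInner, EuclideanSpace.inner_toLp_toLp, star_trivial, dotProduct, mul_comm]

theorem inner_toLp_row_eq_mulVec (N : Matrix (Fin m) (Fin n) ℝ) (i : Fin m)
    (v : EuclideanSpace ℝ (Fin n)) : ⟪WithLp.toLp 2 (N i), v⟫_ℝ = (N *ᵥ v.ofLp) i := by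
  rw [EuclideanSpace.inner_eq_star_dotProduct, star_trivial, dotProduct_comm]
  rfl

theorem frobInner_le_l2_opNorm_mul_sqrt_rank_mul (N M : Matrix (Fin m) (Fin n) ℝ) :
    frobInner N M ≤ ‖N‖ * √M.rank * ‖frobVec M‖ := by
  let K : Submodule ℝ (EuclideanSpace ℝ (Fin n)) :=
    (Submodule.span ℝ (Set.range M.row)).map (WithLp.linearEquiv 2 ℝ (Fin n → ℝ)).symm.toLinearMap
  have hrank : M.rank = Module.finrank ℝ K := by
    rw [rank_eq_finrank_span_row, LinearEquiv.finrank_map_eq]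
  have hrow (i : Fin m) : WithLp.toLp 2 (M i) ∈ K := ⟨M i, Submodule.subset_span ⟨i, rfl⟩, rfl⟩
  let b := stdOrthonormalBasis ℝ K
  -- `C` and `D` hold the coordinates of the rows of `N` and `M` against `b`.
  let C : Matrix (Fin m) (Fin (Module.finrank ℝ K)) ℝ :=
    of fun i k => ⟪WithLp.toLp 2 (N i), (b k : EuclideanSpace ℝ (Fin n))⟫_ℝ
  let D : Matrix (Fin m) (Fin (Module.finrank ℝ K)) ℝ :=
    of fun i k => ⟪(b k : EuclideanSpace ℝ (Fin n)), WithLp.toLp 2 (M i)⟫_ℝ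
  have hND : frobInner N M = frobInner C D := by
    rw [frobInner_eq_sum_inner_rows]
    exact Finset.sum_congr rfl fun i _ => b.inner_eq_sum_inner_mul_inner_of_mem _ (hrow i)
  have hD : ‖frobVec D‖ = ‖frobVec M‖ := by
    have hsq : frobSq D = frobSq M := by
      rw [frobSq_eq_frobInner_self M, frobInner_eq_sum_inner_rows]
      refine Finset.sum_congr rfl fun i _ => ?_
      rw [b.inner_eq_sum_inner_mul_inner_of_mem _ (hrow i)]
      simp only [D, of_apply, real_inner_comm, sq]
    rwa [frobSq_eq_norm_sq, frobSq_eq_norm_sq, pow_left_inj₀ (norm_nonneg _) (norm_nonneg _)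
      two_ne_zero] at hsq
  have hC : ‖frobVec C‖ ≤ ‖N‖ * √(Module.finrank ℝ K) := by
    have hsq : frobSq C ≤ Module.finrank ℝ K * ‖N‖ ^ 2 := by
      calc frobSq C = ∑ k, ‖WithLp.toLp 2 (N *ᵥ (b k : EuclideanSpace ℝ (Fin n)).ofLp)‖ ^ 2 := by
            simp only [frobSq, C, of_apply, inner_toLp_row_eq_mulVec,
              EuclideanSpace.real_norm_sq_eq]
            exact Finset.sum_comm
        _ ≤ ∑ _k, ‖N‖ ^ 2 := by
            gcongr with k
            have hunit : ‖(b k : EuclideanSpace ℝ (Fin n))‖ = 1 := b.orthonormal.1 k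
            simpa [hunit] using N.l2_opNorm_mulVec (b k : EuclideanSpace ℝ (Fin n))
        _ = Module.finrank ℝ K * ‖N‖ ^ 2 := by simp
    calc ‖frobVec C‖ = √(frobSq C) := by rw [frobSq_eq_norm_sq, Real.sqrt_sq (norm_nonneg _)]
      _ ≤ √(Module.finrank ℝ K * ‖N‖ ^ 2) := Real.sqrt_le_sqrt hsq
      _ = ‖N‖ * √(Module.finrank ℝ K) := by
          rw [Real.sqrt_mul (Nat.cast_nonneg _), Real.sqrt_sq (norm_nonneg _), mul_comm]
  calc frobInner N M = frobInner C D := hND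
    _ ≤ ‖frobVec C‖ * ‖frobVec D‖ := frobInner_eq_inner C D ▸ real_inner_le_norm _ _
    _ ≤ ‖N‖ * √M.rank * ‖frobVec M‖ := by rw [hD, hrank]; gcongr

end TraceDuality

theorem Matrix.rank_sub_le {m n K : Type*} [Fintype n] [Field K] (C D : Matrix m n K) :
    (C - D).rank ≤ C.rank + D.rank := by
  have hle : LinearMap.range (C - D).mulVecLin ≤
      LinearMap.range C.mulVecLin ⊔ LinearMap.range D.mulVecLin := by
    rintro _ ⟨w, rfl⟩
    rw [mulVecLin_apply, sub_mulVec]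
    exact Submodule.sub_mem _ (Submodule.mem_sup_left ⟨w, rfl⟩) (Submodule.mem_sup_right ⟨w, rfl⟩)
  exact (Submodule.finrank_mono hle).trans (Submodule.finrank_add_le_finrank_add_finrank _ _)

section OracleInequality

variable {m n : ℕ}

theorem frobSq_sub_le_of_add_le {Y F G H : Matrix (Fin m) (Fin n) ℝ} {a b : ℝ}
    (h : frobSq (Y - F) + a ≤ frobSq (Y - G) + b) :
    frobSq (F - H) ≤ frobSq (G - H) + 2 * frobInner (Y - H) (F - G) + b - a := by
  rw [show Y - F = (Y - H) - (F - H) by abel, show Y - G = (Y - H) - (G - H) by abel] at h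
  rw [show F - G = (F - H) - (G - H) by abel]
  simp only [frobSq_eq_norm_sq, frobInner_eq_inner, frobVec_sub (Y - H), frobVec_sub (F - H),
    norm_sub_sq_real, inner_sub_right] at h ⊢
  linarith

open scoped Matrix.Norms.L2Operator in
theorem frobInner_le_sv_mul_of_projection {E W : Matrix (Fin m) (Fin n) ℝ}
    {P : Matrix (Fin m) (Fin m) ℝ} (hP : Pᵀ = P) (hPW : P * W = W) :
    frobInner E W ≤ sv (P * E) 1 * √W.rank * ‖frobVec W‖ :=
  calc frobInner E W = frobInner (P * E) W := by
        conv_lhs => rw [← hPW, frobInner_mul_right_eq_transpose_mul_left, hP]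
    _ ≤ ‖P * E‖ * √W.rank * ‖frobVec W‖ := frobInner_le_l2_opNorm_mul_sqrt_rank_mul _ _
    _ ≤ sv (P * E) 1 * √W.rank * ‖frobVec W‖ := by gcongr; exact l2_opNorm_le_sv_one _

theorem sq_le_of_basic_inequality {h g t μ ρ₁ ρ₂ θ : ℝ} (hθ : 0 < θ)
    (hbasic : h ^ 2 ≤ g ^ 2 + 2 * t * (h + g) + μ * ρ₂ - μ * ρ₁)
    (hevent : (1 + θ) * t ^ 2 ≤ μ * (ρ₁ + ρ₂)) :
    h ^ 2 ≤ (1 + 2 / θ) ^ 2 * g ^ 2 + 2 * (1 + 2 / θ) * μ * ρ₂ := by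
  -- Young: `4θ(θ+2) t h ≤ 4θ h² + θ(θ+2)² t²` and `4θ(θ+2) t g ≤ 4(θ+2) g² + θ²(θ+2) t²`;
  -- the `t²` terms add up to `2θ(θ+2)(1+θ) t²`, which `hevent` controls.
  have key : θ ^ 2 * h ^ 2 ≤ (θ + 2) ^ 2 * g ^ 2 + 2 * θ * (θ + 2) * μ * ρ₂ := by
    nlinarith [mul_nonneg hθ.le (sq_nonneg (2 * h - (θ + 2) * t)),
      mul_nonneg (by linarith : (0 : ℝ) ≤ θ + 2) (sq_nonneg (2 * g - θ * t)),
      mul_le_mul_of_nonneg_left hbasic (by positivity : (0 : ℝ) ≤ 2 * θ * (θ + 2)),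
      mul_le_mul_of_nonneg_left hevent (by positivity : (0 : ℝ) ≤ 2 * θ * (θ + 2))]
  refine le_of_mul_le_mul_left ?_ (by positivity : (0 : ℝ) < θ ^ 2)
  calc θ ^ 2 * h ^ 2 ≤ (θ + 2) ^ 2 * g ^ 2 + 2 * θ * (θ + 2) * μ * ρ₂ := key
    _ = θ ^ 2 * ((1 + 2 / θ) ^ 2 * g ^ 2 + 2 * (1 + 2 / θ) * μ * ρ₂) := by field_simp

end OracleInequality

theorem rsc_oracle_inequality_general {m n p : ℕ}
    (Y : Matrix (Fin m) (Fin n) ℝ) (X : Matrix (Fin m) (Fin p) ℝ)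
    (A : Matrix (Fin p) (Fin n) ℝ)
    (P : Matrix (Fin m) (Fin m) ℝ)
    (hPsymm : Pᵀ = P) (hPX : P * X = X)
    (μ : ℝ)
    (Ahat : Matrix (Fin p) (Fin n) ℝ)
    (hmin : ∀ B : Matrix (Fin p) (Fin n) ℝ,
      frobSq (Y - X * Ahat) + μ * Ahat.rank ≤ frobSq (Y - X * B) + μ * B.rank)
    (θ : ℝ) (hθ : 0 < θ)
    (hevent : (1 + θ) * (sv (P * (Y - X * A)) 1) ^ 2 ≤ μ) :
    ∀ B : Matrix (Fin p) (Fin n) ℝ,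
      frobSq (X * Ahat - X * A)
        ≤ (1 + 2 / θ) ^ 2 * frobSq (X * B - X * A) + 2 * (1 + 2 / θ) * μ * B.rank := by
  intro B
  set d := sv (P * (Y - X * A)) 1
  have hd : 0 ≤ d := sv_nonneg _ 1
  have hbasic := frobSq_sub_le_of_add_le (H := X * A) (hmin B)
  have hPW : P * (X * Ahat - X * B) = X * Ahat - X * B := by
    rw [Matrix.mul_sub, ← Matrix.mul_assoc, ← Matrix.mul_assoc, hPX]
  have hrank : (X * Ahat - X * B).rank ≤ Ahat.rank + B.rank :=
    (rank_sub_le _ _).trans (add_le_add (rank_mul_le_right X Ahat) (rank_mul_le_right X B))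
  have htriangle : ‖frobVec (X * Ahat - X * B)‖
      ≤ ‖frobVec (X * Ahat - X * A)‖ + ‖frobVec (X * B - X * A)‖ := by
    rw [show X * Ahat - X * B = (X * Ahat - X * A) - (X * B - X * A) by abel, frobVec_sub]
    exact norm_sub_le _ _
  have hcross : frobInner (Y - X * A) (X * Ahat - X * B)
      ≤ d * √(Ahat.rank + B.rank) * (‖frobVec (X * Ahat - X * A)‖ + ‖frobVec (X * B - X * A)‖) :=
    (frobInner_le_sv_mul_of_projection hPsymm hPW).trans (by gcongr; exact_mod_cast hrank)
  rw [frobSq_eq_norm_sq, frobSq_eq_norm_sq]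
  refine sq_le_of_basic_inequality (t := d * √(Ahat.rank + B.rank)) (ρ₁ := Ahat.rank) hθ ?_ ?_
  · rw [frobSq_eq_norm_sq, frobSq_eq_norm_sq] at hbasic
    linarith
  · rw [mul_pow, Real.sq_sqrt (by positivity), ← mul_assoc]
    exact mul_le_mul_of_nonneg_right hevent (by positivity)

/-- Theorem 7 (deterministic oracle inequality): on the event (1+θ)d₁²(PE) ≤ μ, the RSC
estimator Â satisfies ‖XÂ − XA‖_F² ≤ c(θ)²‖XB − XA‖_F² + 2c(θ)μ rank(B) for every B. -/
theorem rsc_oracle_inequality {m n p : ℕ}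
    (Y : Matrix (Fin m) (Fin n) ℝ) (X : Matrix (Fin m) (Fin p) ℝ)
    (A : Matrix (Fin p) (Fin n) ℝ)
    (P : Matrix (Fin m) (Fin m) ℝ)
    (hPsymm : Pᵀ = P) (hPidem : P * P = P) (hPX : P * X = X)
    (hPrange : ∀ u : Fin m → ℝ, ∃ w : Fin p → ℝ, P *ᵥ u = X *ᵥ w)
    (μ : ℝ) (hμ : 0 < μ)
    (Ahat : Matrix (Fin p) (Fin n) ℝ)
    (hmin : ∀ B : Matrix (Fin p) (Fin n) ℝ,
      frobSq (Y - X * Ahat) + μ * Ahat.rank ≤ frobSq (Y - X * B) + μ * B.rank)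
    (θ : ℝ) (hθ : 0 < θ)
    (hevent : (1 + θ) * (sv (P * (Y - X * A)) 1) ^ 2 ≤ μ) :
    ∀ B : Matrix (Fin p) (Fin n) ℝ,
      frobSq (X * Ahat - X * A)
        ≤ (1 + 2 / θ) ^ 2 * frobSq (X * B - X * A) + 2 * (1 + 2 / θ) * μ * B.rank :=
  rsc_oracle_inequality_general Y X A P hPsymm hPX μ Ahat hmin θ hθ hevent
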